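/- Assume Hypotheses 1 and 2. Let U : O_d → ℝ^d be twice continuously differentiable with bounded first and second derivatives, let U be a monotone solution of the stationary master equation, and suppose that for every x ∈ O_d the Jacobian D_x U(x) is positive definite, i.e. ⟨ξ, D_x U(x) ξ⟩ > 0 for every ξ ∈ ℝ^d, ξ ≠ 0. Then for every i ∈ {1,...,d}: r U^i(x) + ⟨F(x,U(x)), ∇_x U^i(x)⟩ + λ(U^i(x) − (T* U(Tx))^i) = G^i(x,U(x)) at every x ∈ O_d with x_i > 0, and r U^i(x) + ⟨F(x,U(x)), ∇_x U^i(x)⟩ + λ(U^i(x) − (T* U(Tx))^i) ≤ G^i(x,U(x)) at every x ∈ O_d with x_i = 0. -/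

import Mathlib

/-!
Write `H` for the residual of the master equation at `x₀ ∈ O_d` (left side minus right side).
Given `y ∈ O_d`, put `w = x₀ - y` and `V = U x₀ + (DU x₀)ᵀ w`. This choice of `V` cancels the
first-order term of `x ↦ ⟪U x - V, x - y⟫ - ⟪U x₀ - V, x₀ - y⟫` at `x₀`, which is therefore at
least `(c - L ‖w‖) ‖x - x₀‖²`, where on the compact convex set `B_R` the Jacobian is uniformly
coercive with constant `c` and Lipschitz with constant `L`. So for `y` close to `x₀` the point
`x₀` is a strict minimiser over `B_R`, and the defining inequality of a monotone solution becomes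
`⟪H, x₀ - y⟫ ≥ 0`. Hence the linear map `⟪H, ·⟫` has a local, thus (by convexity) global, maximum
on `O_d` at `x₀`: `H` lies in the normal cone of the orthant, i.e. `H_i ≤ 0`, with equality
wherever `x₀_i > 0`.
-/

open scoped RealInnerProductSpace
noncomputable section

/-- `ℝ^d` with the Euclidean inner product. -/
abbrev Euc (d : ℕ) := EuclideanSpace ℝ (Fin d)

/-- The positive orthant `O_d = (ℝ≥0)^d`. -/
def Od (d : ℕ) : Set (Euc d) := {x | ∀ i, 0 ≤ x i}

/-- `B_R = {x ∈ O_d : x_1 + ... + x_d ≤ R}`. -/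
def Ball1 (d : ℕ) (R : ℝ) : Set (Euc d) := {x | x ∈ Od d ∧ ∑ i, x i ≤ R}

/-- Monotone solution of the stationary master equation (Definition 2.1), with threshold
`R₁ ≥ R₀` where `R₀` is the constant of Hypothesis 2. -/
def IsMonotoneSolS (d : ℕ) (F G : Euc d → Euc d → Euc d) (r lam : ℝ)
    (T : Euc d →L[ℝ] Euc d) (R₀ : ℝ) (U : Euc d → Euc d) : Prop :=
  ContinuousOn U (Od d) ∧
  ∃ R₁ ≥ R₀, ∀ R ≥ R₁, ∀ V : Euc d, ∀ y ∈ Od d, ∀ x₀ ∈ Ball1 d R,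
    (∀ x ∈ Ball1 d R, x ≠ x₀ → ⟪U x₀ - V, x₀ - y⟫ < ⟪U x - V, x - y⟫) →
    ⟪G x₀ (U x₀), x₀ - y⟫ + ⟪F x₀ (U x₀), U x₀ - V⟫ ≤
      r * ⟪U x₀, x₀ - y⟫
        + lam * ⟪U x₀ - ContinuousLinearMap.adjoint T (U (T x₀)), x₀ - y⟫

open Filter Set Topology
open scoped NNReal

section InnerProductSpace

variable {E : Type*} [NormedAddCommGroup E] [InnerProductSpace ℝ E]

theorem exists_pos_mul_sq_norm_le_inner_of_isCompact [FiniteDimensional ℝ E]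
    {X : Type*} [TopologicalSpace X] {K : Set X} (hK : IsCompact K) {A : X → E →L[ℝ] E}
    (hA : ContinuousOn A K) (hpos : ∀ z ∈ K, ∀ ξ : E, ξ ≠ 0 → 0 < ⟪ξ, A z ξ⟫) :
    ∃ c > 0, ∀ z ∈ K, ∀ ξ : E, c * ‖ξ‖ ^ 2 ≤ ⟪ξ, A z ξ⟫ := by
  have hcont : ContinuousOn (fun p : X × E => ⟪p.2, A p.1 p.2⟫) (K ×ˢ Metric.sphere 0 1) :=
    continuousOn_snd.inner
      ((hA.comp continuousOn_fst fun _ hp => hp.1).clm_apply continuousOn_snd)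
  obtain ⟨c, hc, hcK⟩ := (hK.prod (isCompact_sphere 0 1)).exists_forall_le' hcont
    fun p hp => hpos p.1 hp.1 p.2 (ne_zero_of_mem_unit_sphere ⟨p.2, hp.2⟩)
  refine ⟨c, hc, fun z hz ξ => ?_⟩
  rcases eq_or_ne ξ 0 with rfl | hξ
  · simp
  have hξ' : 0 < ‖ξ‖ := norm_pos_iff.2 hξ
  have hunit := hcK (z, ‖ξ‖⁻¹ • ξ) ⟨hz, by simp [norm_smul, hξ]⟩
  simp only [map_smul, real_inner_smul_left, real_inner_smul_right] at hunit
  calc c * ‖ξ‖ ^ 2 ≤ ‖ξ‖⁻¹ * (‖ξ‖⁻¹ * ⟪ξ, A z ξ⟫) * ‖ξ‖ ^ 2 := by gcongr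
    _ = ⟪ξ, A z ξ⟫ := by field_simp

theorem mul_sq_norm_le_inner_sub_of_le_inner_fderiv {s : Set E} (hs : Convex ℝ s) {U : E → E}
    (hU : Differentiable ℝ U) {c : ℝ} (hc : ∀ z ∈ s, ∀ ξ, c * ‖ξ‖ ^ 2 ≤ ⟪ξ, fderiv ℝ U z ξ⟫)
    {x x₀ : E} (hx : x ∈ s) (hx₀ : x₀ ∈ s) :
    c * ‖x - x₀‖ ^ 2 ≤ ⟪U x - U x₀, x - x₀⟫ := by
  set v := x - x₀
  have hderiv : ∀ t : ℝ,
      HasDerivAt (fun t : ℝ => ⟪U (x₀ + t • v), v⟫) ⟪fderiv ℝ U (x₀ + t • v) v, v⟫ t := by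
    intro t
    have hline : HasDerivAt (fun t : ℝ => x₀ + t • v) v t := by
      simpa using ((hasDerivAt_id t).smul_const v).const_add x₀
    simpa using ((hU _).hasFDerivAt.comp_hasDerivAt t hline).inner ℝ (hasDerivAt_const t v)
  have hseg : ∀ t ∈ Icc (0 : ℝ) 1, x₀ + t • v ∈ s := fun t ht => by
    simpa [v, AffineMap.lineMap_apply_module', add_comm] using
      hs.lineMap_mem hx₀ hx ht
  have := (convex_Icc (0 : ℝ) 1).mul_sub_le_image_sub_of_le_deriv
    (fun t _ => (hderiv t).continuousAt.continuousWithinAt)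
    (fun t _ => (hderiv t).differentiableAt.differentiableWithinAt)
    (fun t ht => (hderiv t).deriv ▸ real_inner_comm v _ ▸
      hc _ (hseg t (interior_subset ht)) v)
    0 (left_mem_Icc.2 zero_le_one) 1 (right_mem_Icc.2 zero_le_one) zero_le_one
  simpa [v, inner_sub_left] using this

theorem norm_sub_sub_fderiv_le_of_lipschitzOnWith {F : Type*} [NormedAddCommGroup F]
    [NormedSpace ℝ F] {s : Set E} (hs : Convex ℝ s) {U : E → F} (hU : Differentiable ℝ U)
    {L : ℝ≥0} (hL : LipschitzOnWith L (fderiv ℝ U) s) {x x₀ : E} (hx : x ∈ s) (hx₀ : x₀ ∈ s) :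
    ‖U x - U x₀ - fderiv ℝ U x₀ (x - x₀)‖ ≤ L * ‖x - x₀‖ ^ 2 := by
  have hbound : ∀ z ∈ segment ℝ x₀ x, ‖fderiv ℝ U z - fderiv ℝ U x₀‖ ≤ L * ‖x - x₀‖ :=
    fun z hz => calc
      ‖fderiv ℝ U z - fderiv ℝ U x₀‖ ≤ L * ‖z - x₀‖ :=
        hL.norm_sub_le (hs.segment_subset hx₀ hx hz) hx₀
      _ ≤ L * ‖x - x₀‖ := by gcongr; exact norm_sub_le_of_mem_segment hz
  calc ‖U x - U x₀ - fderiv ℝ U x₀ (x - x₀)‖ ≤ L * ‖x - x₀‖ * ‖x - x₀‖ :=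
        (convex_segment x₀ x).norm_image_sub_le_of_norm_fderiv_le' (fun z _ => hU z) hbound
          (left_mem_segment ℝ x₀ x) (right_mem_segment ℝ x₀ x)
    _ = L * ‖x - x₀‖ ^ 2 := by ring

theorem inner_sub_adjoint_lt_inner_sub [CompleteSpace E] {s : Set E} {U : E → E}
    {A : E →L[ℝ] E} {x₀ y : E} {c L : ℝ} (hmono : ∀ x ∈ s, c * ‖x - x₀‖ ^ 2 ≤ ⟪U x - U x₀, x - x₀⟫)
    (htaylor : ∀ x ∈ s, ‖U x - U x₀ - A (x - x₀)‖ ≤ L * ‖x - x₀‖ ^ 2)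
    (hy : L * ‖x₀ - y‖ < c) {x : E} (hx : x ∈ s) (hne : x ≠ x₀) :
    ⟪U x₀ - (U x₀ + A.adjoint (x₀ - y)), x₀ - y⟫ <
      ⟪U x - (U x₀ + A.adjoint (x₀ - y)), x - y⟫ := by
  set w := x₀ - y
  set h := x - x₀
  have hh : 0 < ‖h‖ := norm_pos_iff.2 (sub_ne_zero.2 hne)
  have hsplit : ⟪U x - (U x₀ + A.adjoint w), x - y⟫ - ⟪U x₀ - (U x₀ + A.adjoint w), x₀ - y⟫ =
      ⟪U x - U x₀, h⟫ + ⟪U x - U x₀ - A h, w⟫ := by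
    have hxy : x - y = h + w := by simp [h, w]
    rw [hxy, sub_add_cancel_left]
    simp only [inner_sub_left, inner_add_left, inner_add_right, inner_neg_left,
      ContinuousLinearMap.adjoint_inner_left, real_inner_comm w (A h)]
    ring
  have hrem : -(L * ‖h‖ ^ 2 * ‖w‖) ≤ ⟪U x - U x₀ - A h, w⟫ := by
    have := (abs_real_inner_le_norm (U x - U x₀ - A h) w).trans
      (mul_le_mul_of_nonneg_right (htaylor x hx) (norm_nonneg w))
    linarith [neg_abs_le ⟪U x - U x₀ - A h, w⟫]
  have hgap : 0 < (c - L * ‖w‖) * ‖h‖ ^ 2 := by have := sub_pos.2 hy; positivity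
  linarith [hmono x hx]

end InnerProductSpace

section Orthant

variable {d : ℕ}

theorem convex_Od : Convex ℝ (Od d) := by
  intro x hx y hy a b ha hb _ i
  simp only [PiLp.add_apply, PiLp.smul_apply, smul_eq_mul]
  have := hx i; have := hy i
  positivity

theorem convex_Ball1 (R : ℝ) : Convex ℝ (Ball1 d R) :=
  convex_Od.inter (convex_halfSpace_le
    ⟨fun x y => by simp [Finset.sum_add_distrib], fun a x => by simp [Finset.mul_sum]⟩ R)

theorem isCompact_Ball1 (R : ℝ) : IsCompact (Ball1 d R) := by
  have hbox : IsCompact (WithLp.toLp 2 '' pi univ fun _ : Fin d => Icc (0 : ℝ) R) :=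
    (isCompact_univ_pi fun _ => isCompact_Icc).image (PiLp.continuous_toLp 2 _)
  have hclosed : IsClosed (Ball1 d R) := by
    rw [show Ball1 d R = (⋂ i, {x : Euc d | 0 ≤ x i}) ∩ {x | ∑ i, x i ≤ R} by
      ext; simp [Ball1, Od]]
    exact (isClosed_iInter fun i =>
      isClosed_le continuous_const (PiLp.continuous_apply 2 _ i)).inter
      (isClosed_le (continuous_finsetSum _ fun i _ => PiLp.continuous_apply 2 _ i)
        continuous_const)
  refine hbox.of_isClosed_subset hclosed fun x hx => ⟨WithLp.ofLp x, fun i _ => ?_, rfl⟩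
  exact ⟨hx.1 i, (Finset.single_le_sum (fun j _ => hx.1 j) (Finset.mem_univ i)).trans hx.2⟩

theorem coord_nonpos_of_isMaxOn_inner {v x : Euc d} (h : IsMaxOn (fun y => ⟪v, y⟫) (Od d) x)
    (hx : x ∈ Od d) (i : Fin d) : v i ≤ 0 ∧ (0 < x i → v i = 0) := by
  have hmove : ∀ t : ℝ, -t ≤ x i → t * v i ≤ 0 := fun t ht => by
    have hmem : x + EuclideanSpace.single i t ∈ Od d := fun j => by
      rcases eq_or_ne j i with rfl | hj
      · simpa using neg_le_iff_add_nonneg.1 ht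
      · simpa [hj] using hx j
    simpa [inner_add_right, EuclideanSpace.inner_single_right, mul_comm] using h hmem
  have hle : v i ≤ 0 := by simpa using hmove 1 (by linarith [hx i])
  exact ⟨hle, fun hpos => le_antisymm hle (by nlinarith [hmove (-x i) (neg_neg (x i)).le])⟩

end Orthant

section MasterEquation

variable {d : ℕ} {F G : Euc d → Euc d → Euc d} {r lam : ℝ} {T : Euc d →L[ℝ] Euc d}
  {U : Euc d → Euc d}

variable (d F G r lam T U) in
def masterResidual (x : Euc d) : Euc d :=
  r • U x + fderiv ℝ U x (F x (U x)) + lam • (U x - ContinuousLinearMap.adjoint T (U (T x)))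
    - G x (U x)

theorem masterResidual_apply {x : Euc d} (hU : DifferentiableAt ℝ U x) (i : Fin d) :
    masterResidual d F G r lam T U x i =
      r * U x i + fderiv ℝ (fun z : Euc d => U z i) x (F x (U x))
        + lam * (U x i - ContinuousLinearMap.adjoint T (U (T x)) i) - G x (U x) i := by
  have hcoord : fderiv ℝ (fun z : Euc d => U z i) x = (EuclideanSpace.proj i).comp (fderiv ℝ U x) :=
    ((EuclideanSpace.proj (𝕜 := ℝ) i).hasFDerivAt.comp x hU.hasFDerivAt).fderiv
  simp [masterResidual, hcoord]

theorem isLocalMaxOn_inner_masterResidual {R₀ : ℝ} (hU : ContDiff ℝ 2 U)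
    (hsol : IsMonotoneSolS d F G r lam T R₀ U)
    (hpos : ∀ x ∈ Od d, ∀ ξ : Euc d, ξ ≠ 0 → 0 < ⟪ξ, fderiv ℝ U x ξ⟫)
    {x₀ : Euc d} (hx₀ : x₀ ∈ Od d) :
    IsLocalMaxOn (fun y => ⟪masterResidual d F G r lam T U x₀, y⟫) (Od d) x₀ := by
  obtain ⟨-, R₁, -, hsolR⟩ := hsol
  set R := max R₁ (∑ i, x₀ i)
  have hx₀R : x₀ ∈ Ball1 d R := ⟨hx₀, le_max_right _ _⟩
  have hU1 : Differentiable ℝ U := hU.differentiable two_ne_zero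
  obtain ⟨c, hc, hcoer⟩ := exists_pos_mul_sq_norm_le_inner_of_isCompact (isCompact_Ball1 R)
    (hU.continuous_fderiv two_ne_zero).continuousOn fun z hz => hpos z hz.1
  obtain ⟨L, hL⟩ := (hU.fderiv_right (m := 1) le_rfl).contDiffOn.exists_lipschitzOnWith
    one_ne_zero (convex_Ball1 R) (isCompact_Ball1 R)
  have hnear : ∀ᶠ y in 𝓝 x₀, (L : ℝ) * ‖x₀ - y‖ < c := by
    have : Tendsto (fun y => (L : ℝ) * ‖x₀ - y‖) (𝓝 x₀) (𝓝 ((L : ℝ) * ‖x₀ - x₀‖)) :=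
      (by fun_prop : Continuous fun y => (L : ℝ) * ‖x₀ - y‖).tendsto x₀
    exact this.eventually_lt_const (by simpa using hc)
  filter_upwards [nhdsWithin_le_nhds hnear, self_mem_nhdsWithin] with y hy hyOd
  have hmaster := hsolR R (le_max_left _ _) _ y hyOd x₀ hx₀R fun x hx hne =>
    inner_sub_adjoint_lt_inner_sub
      (fun x hx => mul_sq_norm_le_inner_sub_of_le_inner_fderiv (convex_Ball1 R) hU1 hcoer hx hx₀R)
      (fun x hx => norm_sub_sub_fderiv_le_of_lipschitzOnWith (convex_Ball1 R) hU1 hL hx hx₀R)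
      hy hx hne
  rw [sub_add_cancel_left, inner_neg_right, ContinuousLinearMap.adjoint_inner_right] at hmaster
  rw [← sub_nonneg, ← inner_sub_right]
  simp only [masterResidual, inner_sub_left, inner_add_left, real_inner_smul_left] at hmaster ⊢
  linarith

end MasterEquation

theorem consistency_monotone_stationary_general
    (d : ℕ)
    (F G : Euc d → Euc d → Euc d)
    (r lam : ℝ) (T : Euc d →L[ℝ] Euc d)
    -- Hypothesis 2
    (R₀ : ℝ)
    -- `U ∈ W^{2,∞}`
    (U : Euc d → Euc d) (hU2 : ContDiff ℝ 2 U)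
    -- `U` is a monotone solution
    (hUsol : IsMonotoneSolS d F G r lam T R₀ U)
    -- the Jacobian of `U` is positive definite everywhere on `O_d`
    (hUpos : ∀ x ∈ Od d, ∀ ξ : Euc d, ξ ≠ 0 → 0 < ⟪ξ, fderiv ℝ U x ξ⟫) :
    ∀ x ∈ Od d, ∀ i,
      (0 < x i →
        r * U x i + fderiv ℝ (fun z : Euc d => U z i) x (F x (U x))
          + lam * (U x i - ContinuousLinearMap.adjoint T (U (T x)) i)
          = G x (U x) i) ∧
      (x i = 0 →
        r * U x i + fderiv ℝ (fun z : Euc d => U z i) x (F x (U x))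
          + lam * (U x i - ContinuousLinearMap.adjoint T (U (T x)) i)
          ≤ G x (U x) i) := by
  intro x hx i
  have hmax : IsMaxOn (fun y => ⟪masterResidual d F G r lam T U x, y⟫) (Od d) x :=
    .of_isLocalMaxOn_of_concaveOn hx (isLocalMaxOn_inner_masterResidual hU2 hUsol hUpos hx)
      ((innerₛₗ ℝ (masterResidual d F G r lam T U x)).concaveOn convex_Od)
  obtain ⟨hle, heq⟩ := coord_nonpos_of_isMaxOn_inner hmax hx i
  rw [masterResidual_apply ((hU2.differentiable two_ne_zero) x)] at hle heq
  exact ⟨fun hpos => sub_eq_zero.1 (heq hpos), fun _ => sub_nonpos.1 hle⟩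

/-- Proposition 2.3 (consistency): a `W^{2,∞}` monotone solution with everywhere positive
definite Jacobian satisfies the master equation classically where `x_i > 0`, and the
corresponding inequality where `x_i = 0`. -/
theorem consistency_monotone_stationary
    (d : ℕ) (hd : 1 ≤ d)
    (F G : Euc d → Euc d → Euc d)
    (hFc : Continuous fun q : Euc d × Euc d => F q.1 q.2)
    (hGc : Continuous fun q : Euc d × Euc d => G q.1 q.2)
    (r lam : ℝ) (hr : 0 < r) (hlam : 0 ≤ lam) (T : Euc d →L[ℝ] Euc d)
    -- Hypothesis 1
    (hyp1F : ∀ x ∈ Od d, ∀ p : Euc d, ∀ i, x i = 0 → F x p i ≤ 0)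
    (hyp1T : ∀ x ∈ Od d, T x ∈ Od d)
    -- Hypothesis 2
    (R₀ : ℝ) (hR₀ : 0 < R₀)
    (hyp2F : ∀ x ∈ Od d, ∀ p : Euc d, R₀ ≤ ∑ i, x i → 0 ≤ ∑ i, F x p i)
    (hyp2T : ∀ R ≥ R₀, ∀ x ∈ Ball1 d R, T x ∈ Ball1 d R)
    -- `U ∈ W^{2,∞}`
    (U : Euc d → Euc d) (hU2 : ContDiff ℝ 2 U)
    (hUbdd : ∃ M : ℝ, ∀ x ∈ Od d, ‖fderiv ℝ U x‖ ≤ M ∧ ‖iteratedFDeriv ℝ 2 U x‖ ≤ M)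
    -- `U` is a monotone solution
    (hUsol : IsMonotoneSolS d F G r lam T R₀ U)
    -- the Jacobian of `U` is positive definite everywhere on `O_d`
    (hUpos : ∀ x ∈ Od d, ∀ ξ : Euc d, ξ ≠ 0 → 0 < ⟪ξ, fderiv ℝ U x ξ⟫) :
    ∀ x ∈ Od d, ∀ i,
      (0 < x i →
        r * U x i + fderiv ℝ (fun z : Euc d => U z i) x (F x (U x))
          + lam * (U x i - ContinuousLinearMap.adjoint T (U (T x)) i)
          = G x (U x) i) ∧
      (x i = 0 →
        r * U x i + fderiv ℝ (fun z : Euc d => U z i) x (F x (U x))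
          + lam * (U x i - ContinuousLinearMap.adjoint T (U (T x)) i)
          ≤ G x (U x) i) :=
  consistency_monotone_stationary_general d F G r lam T R₀ U hU2 hUsol hUpos
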